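/- For ω, ω' ∈ {0,1}^m and multi-triangle densities g_{L,ω,h}, g_{L,ω',h} with disjoint bump supports, the squared L² distance satisfies ∫₀¹ (g_{L,ω,h} - g_{L,ω',h})² ≥ (2/3) d_H(ω,ω') L² h³ (1 - 3 m h), where d_H is the Hamming distance. -/

import Mathlib

/-!
Write `δᵢ = [ωᵢ] - [ω'ᵢ]`. Then `g_ω - g_ω' = (|ω'| - |ω|) L h² + ∑ᵢ δᵢ K(· - cᵢ)`, and since the
bumps have disjoint supports inside `[0, 1]`, squaring and integrating gives exactly
`(2/3) d_H L² h³ - (|ω| - |ω'|)² L² h⁴`, and the correction term is at most `d_H m L² h⁴`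
because `||ω| - |ω'|| ≤ d_H ≤ m`.
-/

open MeasureTheory Set

noncomputable def triK (L h t : ℝ) : ℝ := max (L * (h - |t|)) 0

def wOne {m : ℕ} (ω : Fin m → Bool) : ℕ := (Finset.univ.filter fun i => ω i = true).card

def hamDist {m : ℕ} (ω ω' : Fin m → Bool) : ℕ :=
  (Finset.univ.filter fun i => ω i ≠ ω' i).card

noncomputable def gMulti (L h : ℝ) (m : ℕ) (ω : Fin m → Bool) (t : ℝ) : ℝ :=
  1 - (wOne ω : ℝ) * L * h ^ 2 +
    ∑ i : Fin m, (if ω i then (1 : ℝ) else 0) * triK L h (t - ((i : ℕ) + 1) / ((m : ℕ) + 1))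

noncomputable def bumpCenter (m : ℕ) (i : Fin m) : ℝ := ((i : ℕ) + 1) / ((m : ℕ) + 1)

lemma continuous_triK (L h : ℝ) : Continuous (triK L h) := by
  unfold triK; fun_prop

section TriangleKernel

variable {L h : ℝ}

lemma triK_eq_zero_of_le_abs (hL : 0 ≤ L) {t : ℝ} (ht : h ≤ |t|) : triK L h t = 0 :=
  max_eq_right (mul_nonpos_of_nonneg_of_nonpos hL (by linarith))

lemma integral_triK_pow (hL : 0 ≤ L) (hh : 0 ≤ h) {k : ℕ} (hk : k ≠ 0) :
    ∫ t, triK L h t ^ k = 2 * L ^ k * h ^ (k + 1) / (k + 1) := by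
  calc ∫ t, triK L h t ^ k = ∫ t, (fun x ↦ max (L * (h - x)) 0 ^ k) |t| := rfl
    _ = 2 * ∫ x in Ioi 0, max (L * (h - x)) 0 ^ k :=
      integral_comp_abs (f := fun x ↦ max (L * (h - x)) 0 ^ k)
    _ = 2 * ∫ x in Ioc 0 h, (L * (h - x)) ^ k := by
      rw [setIntegral_eq_of_subset_of_forall_sdiff_eq_zero measurableSet_Ioi Ioc_subset_Ioi_self
        fun x hx ↦ ?_]
      · refine congrArg _ (setIntegral_congr_fun measurableSet_Ioc fun x hx ↦ ?_)
        rw [max_eq_left (mul_nonneg hL (sub_nonneg.2 hx.2))]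
      · have hhx : h < x := lt_of_not_ge fun hxh ↦ hx.2 ⟨hx.1, hxh⟩
        rw [max_eq_right (mul_nonpos_of_nonneg_of_nonpos hL (by linarith)), zero_pow hk]
    _ = 2 * ∫ x in 0..h, (L * x) ^ k := by
      rw [← intervalIntegral.integral_of_le hh,
        intervalIntegral.integral_comp_sub_left (fun x ↦ (L * x) ^ k), sub_self, sub_zero]
    _ = 2 * L ^ k * h ^ (k + 1) / (k + 1) := by
      simp_rw [mul_pow, intervalIntegral.integral_const_mul, integral_pow]
      ring

lemma setIntegral_Icc_triK_sub_pow (hL : 0 ≤ L) (hh : 0 ≤ h) {a b c : ℝ} (hac : a + h ≤ c)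
    (hcb : c + h ≤ b) {k : ℕ} (hk : k ≠ 0) :
    ∫ t in Icc a b, triK L h (t - c) ^ k = 2 * L ^ k * h ^ (k + 1) / (k + 1) := by
  rw [setIntegral_eq_integral_of_forall_compl_eq_zero fun t ht ↦ ?_,
    integral_sub_right_eq_self (fun s ↦ triK L h s ^ k) c, integral_triK_pow hL hh hk]
  rw [triK_eq_zero_of_le_abs hL, zero_pow hk]
  rcases not_and_or.1 ht with ht | ht <;> rw [not_le] at ht
  · rw [abs_of_neg (by linarith)]; linarith
  · rw [abs_of_pos (by linarith)]; linarith

lemma triK_sub_mul_triK_sub_eq_zero (hL : 0 ≤ L) {a b : ℝ} (hab : 2 * h ≤ |a - b|) (t : ℝ) :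
    triK L h (t - a) * triK L h (t - b) = 0 := by
  have : h ≤ |t - a| ∨ h ≤ |t - b| := by
    by_contra! H
    have := abs_sub_le a t b
    rw [abs_sub_comm a t] at this
    linarith
  rcases this with h' | h'
  · rw [triK_eq_zero_of_le_abs hL h', zero_mul]
  · rw [triK_eq_zero_of_le_abs hL h', mul_zero]

end TriangleKernel

lemma Finset.sq_sum_eq_sum_sq_of_mul_eq_zero {ι R : Type*} [CommSemiring R] (s : Finset ι)
    (a : ι → R) (h : ∀ i ∈ s, ∀ j ∈ s, i ≠ j → a i * a j = 0) :
    (∑ i ∈ s, a i) ^ 2 = ∑ i ∈ s, a i ^ 2 := by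
  rw [sq, Finset.sum_mul_sum]
  refine Finset.sum_congr rfl fun i hi ↦ ?_
  rw [Finset.sum_eq_single_of_mem i hi fun j hj hji ↦ h i hi j hj hji.symm, sq]

lemma integral_sq_const_add_sum_of_mul_eq_zero {X ι : Type*} [MeasurableSpace X] {μ : Measure X}
    [IsFiniteMeasure μ] (s : Finset ι) (C : ℝ) {f : ι → X → ℝ}
    (hf : ∀ i ∈ s, Integrable (f i) μ) (hf_sq : ∀ i ∈ s, Integrable (fun x ↦ f i x ^ 2) μ)
    (hdisj : ∀ i ∈ s, ∀ j ∈ s, i ≠ j → ∀ x, f i x * f j x = 0) :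
    ∫ x, (C + ∑ i ∈ s, f i x) ^ 2 ∂μ
      = C ^ 2 * μ.real univ + 2 * C * ∑ i ∈ s, ∫ x, f i x ∂μ + ∑ i ∈ s, ∫ x, f i x ^ 2 ∂μ := by
  have hexpand : ∀ x, (C + ∑ i ∈ s, f i x) ^ 2
      = C ^ 2 + 2 * C * ∑ i ∈ s, f i x + ∑ i ∈ s, f i x ^ 2 := fun x ↦ by
    rw [← Finset.sq_sum_eq_sum_sq_of_mul_eq_zero s (f · x)
      fun i hi j hj hij ↦ hdisj i hi j hj hij x]
    ring
  have hsum : Integrable (fun x ↦ ∑ i ∈ s, f i x) μ := integrable_finsetSum s hf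
  have hsum_sq : Integrable (fun x ↦ ∑ i ∈ s, f i x ^ 2) μ := integrable_finsetSum s hf_sq
  have hlin : Integrable (fun x ↦ C ^ 2 + 2 * C * ∑ i ∈ s, f i x) μ :=
    (integrable_const _).add (hsum.const_mul _)
  simp_rw [hexpand]
  rw [integral_add hlin hsum_sq, integral_add (integrable_const _) (hsum.const_mul _),
    integral_const, integral_const_mul, integral_finsetSum s hf, integral_finsetSum s hf_sq,
    smul_eq_mul, mul_comm (μ.real univ)]

noncomputable def boolDiff {m : ℕ} (ω ω' : Fin m → Bool) (i : Fin m) : ℝ :=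
  (if ω i then 1 else 0) - (if ω' i then 1 else 0)

section BoolVectors

variable {m : ℕ} (ω ω' : Fin m → Bool)

lemma sum_boolDiff : ∑ i, boolDiff ω ω' i = (wOne ω : ℝ) - wOne ω' := by
  simp [boolDiff, wOne, Finset.sum_sub_distrib, Finset.sum_boole]

lemma sum_boolDiff_sq : ∑ i, boolDiff ω ω' i ^ 2 = (hamDist ω ω' : ℝ) := by
  rw [hamDist, Finset.natCast_card_filter]
  refine Finset.sum_congr rfl fun i _ ↦ ?_
  cases hi : ω i <;> cases hi' : ω' i <;> norm_num [boolDiff, hi, hi']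

lemma abs_wOne_sub_wOne_le_hamDist : |(wOne ω : ℝ) - wOne ω'| ≤ hamDist ω ω' := by
  rw [← sum_boolDiff, ← sum_boolDiff_sq]
  refine (Finset.abs_sum_le_sum_abs _ _).trans (Finset.sum_le_sum fun i _ ↦ ?_)
  cases hi : ω i <;> cases hi' : ω' i <;> norm_num [boolDiff, hi, hi']

lemma hamDist_le : hamDist ω ω' ≤ m :=
  (Finset.card_filter_le _ _).trans_eq (Finset.card_fin m)

end BoolVectors

section Bumps

variable {L h : ℝ} {m : ℕ}

lemma bumpCenter_bounds (hh : h ≤ 1 / (2 * ((m : ℝ) + 1))) (i : Fin m) :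
    h ≤ bumpCenter m i ∧ bumpCenter m i + h ≤ 1 := by
  have hm : (0 : ℝ) < m + 1 := by positivity
  have hi : ((i : ℕ) : ℝ) + 1 ≤ m := by exact_mod_cast i.isLt
  rw [le_div_iff₀ (by positivity)] at hh
  unfold bumpCenter
  constructor
  · rw [le_div_iff₀ hm]; nlinarith
  · rw [div_add' _ _ _ hm.ne', div_le_one hm]; linarith

lemma two_mul_le_abs_bumpCenter_sub (hh : h ≤ 1 / (2 * ((m : ℝ) + 1))) {i j : Fin m}
    (hij : i ≠ j) : 2 * h ≤ |bumpCenter m i - bumpCenter m j| := by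
  have hm : (0 : ℝ) < m + 1 := by positivity
  have hsep : (1 : ℝ) ≤ |((i : ℕ) : ℝ) - (j : ℕ)| := by
    have hij' : ((i : ℕ) : ℤ) - (j : ℕ) ≠ 0 :=
      sub_ne_zero.2 (by exact_mod_cast Fin.val_ne_of_ne hij)
    exact_mod_cast Int.one_le_abs hij'
  rw [le_div_iff₀ (by positivity)] at hh
  calc 2 * h ≤ 1 / (m + 1) := by rw [le_div_iff₀ hm]; linarith
    _ ≤ |((i : ℕ) : ℝ) - (j : ℕ)| / (m + 1) := by gcongr
    _ = |bumpCenter m i - bumpCenter m j| := by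
      rw [bumpCenter, bumpCenter, ← sub_div, abs_div, abs_of_pos hm]; ring_nf

lemma gMulti_sub_gMulti (ω ω' : Fin m → Bool) (t : ℝ) :
    gMulti L h m ω t - gMulti L h m ω' t
      = ((wOne ω' : ℝ) - wOne ω) * L * h ^ 2
        + ∑ i, boolDiff ω ω' i * triK L h (t - bumpCenter m i) := by
  simp only [gMulti, bumpCenter, boolDiff, sub_mul, Finset.sum_sub_distrib]
  ring

end Bumps

lemma integral_sq_gMulti_sub_gMulti {L h : ℝ} {m : ℕ} (hL : 0 ≤ L) (hh : 0 ≤ h)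
    (hh2 : h ≤ 1 / (2 * ((m : ℝ) + 1))) (ω ω' : Fin m → Bool) :
    ∫ t in Icc (0 : ℝ) 1, (gMulti L h m ω t - gMulti L h m ω' t) ^ 2
      = 2 / 3 * hamDist ω ω' * L ^ 2 * h ^ 3 - ((wOne ω : ℝ) - wOne ω') ^ 2 * L ^ 2 * h ^ 4 := by
  have hbump (i : Fin m) : Continuous fun t ↦ boolDiff ω ω' i * triK L h (t - bumpCenter m i) :=
    continuous_const.mul ((continuous_triK L h).comp (continuous_sub_right _))
  have hint (k : ℕ) (hk : k ≠ 0) (i : Fin m) :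
      ∫ t in Icc (0 : ℝ) 1, triK L h (t - bumpCenter m i) ^ k
        = 2 * L ^ k * h ^ (k + 1) / (k + 1) :=
    setIntegral_Icc_triK_sub_pow hL hh ((zero_add h).trans_le (bumpCenter_bounds hh2 i).1)
      (bumpCenter_bounds hh2 i).2 hk
  have hint₁ (i : Fin m) : ∫ t in Icc (0 : ℝ) 1, triK L h (t - bumpCenter m i) = L * h ^ 2 := by
    have h₁ := hint 1 one_ne_zero i
    simp only [pow_one] at h₁
    rw [h₁]; ring
  simp_rw [gMulti_sub_gMulti]
  rw [integral_sq_const_add_sum_of_mul_eq_zero _ _ (fun i _ ↦ (hbump i).integrableOn_Icc)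
    (fun i _ ↦ ((hbump i).pow 2).integrableOn_Icc) fun i _ j _ hij t ↦ by
      rw [mul_mul_mul_comm, triK_sub_mul_triK_sub_eq_zero hL
        (two_mul_le_abs_bumpCenter_sub hh2 hij), mul_zero]]
  simp_rw [mul_pow, integral_const_mul, hint 2 two_ne_zero, hint₁, ← Finset.sum_mul,
    sum_boolDiff, sum_boolDiff_sq, measureReal_restrict_apply_univ,
    Real.volume_real_Icc_of_le zero_le_one]
  ring

theorem l2_gMulti_ge_general (m : ℕ) (ω ω' : Fin m → Bool)
    (L h : ℝ) (hL : 0 < L) (hh : 0 < h) (hh2 : h ≤ 1 / (2 * ((m : ℝ) + 1))) :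
    (∫ t in Set.Icc (0 : ℝ) 1, (gMulti L h m ω t - gMulti L h m ω' t) ^ 2)
      ≥ (2 / 3) * (hamDist ω ω' : ℝ) * L ^ 2 * h ^ 3 * (1 - 3 * (m : ℝ) * h) := by
  rw [ge_iff_le, integral_sq_gMulti_sub_gMulti hL.le hh.le hh2]
  have hD : |(wOne ω : ℝ) - wOne ω'| ≤ hamDist ω ω' := abs_wOne_sub_wOne_le_hamDist ω ω'
  have hDm : (hamDist ω ω' : ℝ) ≤ m := by exact_mod_cast hamDist_le ω ω'
  have hsq : ((wOne ω : ℝ) - wOne ω') ^ 2 ≤ 2 * hamDist ω ω' * m := by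
    rw [← sq_abs, sq]
    nlinarith [mul_le_mul hD (hD.trans hDm) (abs_nonneg _) (Nat.cast_nonneg _)]
  linarith [mul_le_mul_of_nonneg_right hsq (by positivity : 0 ≤ L ^ 2 * h ^ 4)]

/-- Squared `L²` separation of multi-triangle densities:
`∫₀¹ (g_ω - g_ω')² ≥ (2/3) d_H(ω,ω') L² h³ (1 - 3 m h)`. -/
theorem l2_gMulti_ge (m : ℕ) (hm : 1 ≤ m) (ω ω' : Fin m → Bool)
    (L h : ℝ) (hL : 0 < L) (hh : 0 < h) (hh2 : h ≤ 1 / (2 * ((m : ℝ) + 1))) :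
    (∫ t in Set.Icc (0 : ℝ) 1, (gMulti L h m ω t - gMulti L h m ω' t) ^ 2)
      ≥ (2 / 3) * (hamDist ω ω' : ℝ) * L ^ 2 * h ^ 3 * (1 - 3 * (m : ℝ) * h) :=
  l2_gMulti_ge_general m ω ω' L h hL hh hh2
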